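/- arXiv:1901.03940 — 2 statements merged into one kernel-verified Lean document; each statement's English description precedes it below -/
import Mathlib

section
/- Let ρ_t ∈ ℂ^N with ‖ρ_t‖=1, let A be linear satisfying |⟨X, (A^H A - I)(vv^H)⟩_F| ≤ δ₁ ‖X‖_* for all unit vectors v and all Hermitian X with ‖X‖_* denoting the nuclear norm (implied by the RIP over rank-1 PSD matrices with constant δ₁). If ρ ∈ ℂ^N satisfies dist(ρ, ρ_t) ≤ ε < 1, then with E = ρρ^H - ρ_tρ_t^H, |⟨E, (A^H A - I)(E)⟩_F| ≤ δ₂ ‖E‖_F² where δ₂ = √2(2+ε)δ₁/√((1-ε)(2-ε)), and consequently (1-δ₂)‖E‖_F² ≤ ‖A(E)‖² ≤ (1+δ₂)‖E‖_F². -/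
open ComplexConjugate

/-- The lifted rank-1 PSD matrix `ρρᴴ` as an element of the Frobenius Hilbert space. -/
noncomputable def outerE {N : ℕ} (x : EuclideanSpace ℂ (Fin N)) :
    EuclideanSpace ℂ (Fin N × Fin N) := WithLp.toLp 2 (fun p : Fin N × Fin N => x p.1 * conj (x p.2))

/-- A matrix viewed as an element of the Frobenius Hilbert space. -/
noncomputable def toMatE {N : ℕ} (X : Matrix (Fin N) (Fin N) ℂ) :
    EuclideanSpace ℂ (Fin N × Fin N) := WithLp.toLp 2 (fun p : Fin N × Fin N => X p.1 p.2)

/-- Phase-invariant distance `dist(ρ, ρ_t) = min_φ ‖ρ - e^{iφ} ρ_t‖`. -/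
noncomputable def pdist {N : ℕ} (x y : EuclideanSpace ℂ (Fin N)) : ℝ :=
  sInf {r : ℝ | ∃ φ : ℝ, r = ‖x - Complex.exp (φ * Complex.I) • y‖}

/-!
Write `E = ρρᴴ - ρₜρₜᴴ = ∑ₖ λₖ vₖvₖᴴ` in an orthonormal eigenbasis of the Hermitian matrix `E`.
Expanding the second argument, `⟨E, (AᴴA - I)E⟩ = ∑ₖ λₖ ⟨E, (AᴴA - I)(vₖvₖᴴ)⟩`, so the hypothesis
bounds it by `δ₁ ‖E‖_*²`. As `E` has rank at most two, Cauchy–Schwarz on its nonzero eigenvalues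
gives `‖E‖_*² ≤ 2 ‖E‖_F²`, and `2δ₁ ≤ δ₂` for `0 ≤ ε < 1`. Finally
`⟨E, (AᴴA - I)E⟩ = ‖A E‖² - ‖E‖²` is real, which yields the two-sided bound.
-/

open Matrix

theorem inner_outerE {N : ℕ} (x y : EuclideanSpace ℂ (Fin N)) :
    (inner ℂ (outerE x) (outerE y) : ℂ) = conj (inner ℂ x y : ℂ) * (inner ℂ x y : ℂ) := by
  simp only [PiLp.inner_apply, RCLike.inner_apply, outerE]
  rw [Fintype.sum_prod_type]
  simp only [map_mul, map_sum, Complex.conj_conj]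
  rw [Finset.sum_mul_sum, Finset.sum_comm]
  exact Finset.sum_congr rfl fun j _ => Finset.sum_congr rfl fun i _ => by ring

theorem Orthonormal.outerE {N : ℕ} {ι : Type*} {v : ι → EuclideanSpace ℂ (Fin N)}
    (hv : Orthonormal ℂ v) : Orthonormal ℂ (fun k => outerE (v k)) := by
  classical
  rw [orthonormal_iff_ite] at hv ⊢
  intro i j
  rw [inner_outerE, hv i j]
  split_ifs <;> simp

theorem Matrix.isHermitian_vecMulVec_star {n 𝕜 : Type*} [RCLike 𝕜] (x : n → 𝕜) :
    (vecMulVec x (star x)).IsHermitian := by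
  rw [IsHermitian, conjTranspose_vecMulVec, star_star]

theorem Matrix.rank_add_le {m n K : Type*} [Fintype m] [Fintype n] [Field K]
    (A B : Matrix m n K) : (A + B).rank ≤ A.rank + B.rank := by
  rw [Matrix.rank, Matrix.rank, Matrix.rank, Matrix.mulVecLin_add]
  exact (Submodule.finrank_mono (LinearMap.range_add_le _ _)).trans
    (Submodule.finrank_add_le_finrank_add_finrank _ _)

theorem Matrix.rank_vecMulVec_star_sub_le {n 𝕜 : Type*} [Fintype n] [RCLike 𝕜] (x y : n → 𝕜) :
    (vecMulVec x (star x) - vecMulVec y (star y)).rank ≤ 2 := by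
  rw [sub_eq_add_neg, ← neg_vecMulVec]
  exact (rank_add_le _ _).trans (add_le_add (rank_vecMulVec_le _ _) (rank_vecMulVec_le _ _))

theorem Matrix.IsHermitian.apply_eq_sum_eigenvalues_mul {n 𝕜 : Type*} [Fintype n] [DecidableEq n]
    [RCLike 𝕜] {X : Matrix n n 𝕜} (hX : X.IsHermitian) (i j : n) :
    X i j = ∑ k, (hX.eigenvalues k : 𝕜) *
      (hX.eigenvectorBasis k i * star (hX.eigenvectorBasis k j)) := by
  conv_lhs => rw [hX.spectral_theorem, Unitary.conjStarAlgAut_apply]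
  rw [mul_apply]
  simp only [mul_diagonal, star_apply, eigenvectorUnitary_apply, Function.comp_apply]
  exact Finset.sum_congr rfl fun k _ => by ring

theorem Matrix.IsHermitian.sq_sum_abs_eigenvalues_le {n 𝕜 : Type*} [Fintype n] [DecidableEq n]
    [RCLike 𝕜] {X : Matrix n n 𝕜} (hX : X.IsHermitian) :
    (∑ k, |hX.eigenvalues k|) ^ 2 ≤ X.rank * ∑ k, hX.eigenvalues k ^ 2 := by
  classical
  set S := Finset.univ.filter fun k => hX.eigenvalues k ≠ 0
  have hrank : X.rank = S.card := by
    rw [hX.rank_eq_card_non_zero_eigs, Fintype.card_subtype]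
  have hsupp : ∑ k, |hX.eigenvalues k| = ∑ k ∈ S, |hX.eigenvalues k| :=
    (Finset.sum_filter_ne_zero _).symm.trans (by simp [S])
  calc (∑ k, |hX.eigenvalues k|) ^ 2
      ≤ S.card * ∑ k ∈ S, |hX.eigenvalues k| ^ 2 := hsupp ▸ sq_sum_le_card_mul_sum_sq
    _ ≤ X.rank * ∑ k, hX.eigenvalues k ^ 2 := by
      rw [hrank]
      gcongr
      simpa only [sq_abs] using
        Finset.sum_le_sum_of_subset_of_nonneg S.subset_univ fun k _ _ => sq_nonneg _

namespace Matrix.IsHermitian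

variable {N : ℕ} {X : Matrix (Fin N) (Fin N) ℂ} (hX : X.IsHermitian)

theorem toMatE_eq_sum :
    toMatE X = ∑ k, (hX.eigenvalues k : ℂ) • outerE (hX.eigenvectorBasis k) := by
  ext p
  rw [WithLp.ofLp_sum, Finset.sum_apply]
  exact hX.apply_eq_sum_eigenvalues_mul p.1 p.2

theorem norm_toMatE_sq : ‖toMatE X‖ ^ 2 = ∑ k, hX.eigenvalues k ^ 2 := by
  rw [@norm_sq_eq_re_inner ℂ, hX.toMatE_eq_sum,
    hX.eigenvectorBasis.orthonormal.outerE.inner_sum]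
  simp [sq]

theorem inner_toMatE_apply_toMatE (T : EuclideanSpace ℂ (Fin N × Fin N) →ₗ[ℂ]
      EuclideanSpace ℂ (Fin N × Fin N)) :
    inner ℂ (toMatE X) (T (toMatE X)) =
      ∑ k, (hX.eigenvalues k : ℂ) * inner ℂ (toMatE X) (T (outerE (hX.eigenvectorBasis k))) := by
  have hT : T (toMatE X) = ∑ k, (hX.eigenvalues k : ℂ) • T (outerE (hX.eigenvectorBasis k)) := by
    rw [hX.toMatE_eq_sum, map_sum]
    simp only [map_smul]
  simp only [hT, inner_sum, inner_smul_right]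

theorem norm_inner_toMatE_apply_toMatE_le {T : EuclideanSpace ℂ (Fin N × Fin N) →ₗ[ℂ]
      EuclideanSpace ℂ (Fin N × Fin N)} {r : ℕ} {δ : ℝ} (hr : X.rank ≤ r)
    (hT : ∀ v : EuclideanSpace ℂ (Fin N), ‖v‖ = 1 →
      ‖inner ℂ (toMatE X) (T (outerE v))‖ ≤ δ * ∑ k, |hX.eigenvalues k|) :
    ‖inner ℂ (toMatE X) (T (toMatE X))‖ ≤ r * δ * ‖toMatE X‖ ^ 2 := by
  set L := ∑ k, |hX.eigenvalues k|
  have hbound : ‖inner ℂ (toMatE X) (T (toMatE X))‖ ≤ δ * L ^ 2 := by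
    rw [hX.inner_toMatE_apply_toMatE]
    calc _ ≤ ∑ k, |hX.eigenvalues k| * (δ * L) := by
          refine (norm_sum_le _ _).trans (Finset.sum_le_sum fun k _ => ?_)
          rw [norm_mul, Complex.norm_real, Real.norm_eq_abs]
          exact mul_le_mul_of_nonneg_left (hT _ (hX.eigenvectorBasis.orthonormal.1 k))
            (abs_nonneg _)
      _ = δ * L ^ 2 := by rw [← Finset.sum_mul]; ring
  have hnuc : L ^ 2 ≤ r * ‖toMatE X‖ ^ 2 := by
    rw [hX.norm_toMatE_sq]
    exact hX.sq_sum_abs_eigenvalues_le.trans (by gcongr)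
  have hfro : ‖toMatE X‖ ^ 2 ≤ L ^ 2 := by
    rw [hX.norm_toMatE_sq]
    simpa only [sq_abs] using
      Finset.sum_sq_le_sq_sum_of_nonneg fun k _ => abs_nonneg (hX.eigenvalues k)
  rcases le_or_gt 0 δ with hδ | hδ
  · calc _ ≤ δ * L ^ 2 := hbound
      _ ≤ δ * (r * ‖toMatE X‖ ^ 2) := by gcongr
      _ = r * δ * ‖toMatE X‖ ^ 2 := by ring
  · -- a negative `δ` forces `X = 0`
    have hL : L ^ 2 = 0 := by nlinarith [norm_nonneg (inner ℂ (toMatE X) (T (toMatE X)))]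
    have hF : ‖toMatE X‖ ^ 2 = 0 := le_antisymm (hL ▸ hfro) (sq_nonneg _)
    simpa [hL, hF] using hbound

end Matrix.IsHermitian

theorem pdist_nonneg {N : ℕ} (x y : EuclideanSpace ℂ (Fin N)) : 0 ≤ pdist x y :=
  Real.sInf_nonneg (by rintro r ⟨φ, rfl⟩; exact norm_nonneg _)

theorem two_mul_le_sqrt_two_mul_div_sqrt {ε δ : ℝ} (hε₀ : 0 ≤ ε) (hε₁ : ε < 1) (hδ : 0 ≤ δ) :
    2 * δ ≤ Real.sqrt 2 * (2 + ε) * δ / Real.sqrt ((1 - ε) * (2 - ε)) := by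
  have hpos : 0 < (1 - ε) * (2 - ε) := by nlinarith
  have hsqrt : 2 * Real.sqrt ((1 - ε) * (2 - ε)) ≤ Real.sqrt 2 * (2 + ε) := by
    rw [← pow_le_pow_iff_left₀ (by positivity) (by positivity) two_ne_zero, mul_pow, mul_pow,
      Real.sq_sqrt hpos.le, Real.sq_sqrt zero_le_two]
    nlinarith
  rw [le_div_iff₀ (Real.sqrt_pos.mpr hpos)]
  nlinarith

theorem inner_adjoint_comp_sub_id_self {𝕜 E F : Type*} [RCLike 𝕜]
    [NormedAddCommGroup E] [InnerProductSpace 𝕜 E] [FiniteDimensional 𝕜 E]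
    [NormedAddCommGroup F] [InnerProductSpace 𝕜 F] [FiniteDimensional 𝕜 F]
    (A : E →ₗ[𝕜] F) (x : E) :
    inner 𝕜 x ((LinearMap.adjoint A ∘ₗ A - LinearMap.id : E →ₗ[𝕜] E) x) =
      ((‖A x‖ ^ 2 - ‖x‖ ^ 2 : ℝ) : 𝕜) := by
  rw [LinearMap.sub_apply, LinearMap.comp_apply, LinearMap.id_apply, inner_sub_right,
    LinearMap.adjoint_inner_right, inner_self_eq_norm_sq_to_K, inner_self_eq_norm_sq_to_K]
  push_cast
  rfl

theorem sq_norm_apply_bounds_of_norm_inner_le {𝕜 E F : Type*} [RCLike 𝕜]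
    [NormedAddCommGroup E] [InnerProductSpace 𝕜 E] [FiniteDimensional 𝕜 E]
    [NormedAddCommGroup F] [InnerProductSpace 𝕜 F] [FiniteDimensional 𝕜 F]
    {A : E →ₗ[𝕜] F} {x : E} {c : ℝ}
    (h : ‖inner 𝕜 x ((LinearMap.adjoint A ∘ₗ A - LinearMap.id : E →ₗ[𝕜] E) x)‖ ≤ c * ‖x‖ ^ 2) :
    (1 - c) * ‖x‖ ^ 2 ≤ ‖A x‖ ^ 2 ∧ ‖A x‖ ^ 2 ≤ (1 + c) * ‖x‖ ^ 2 := by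
  rw [inner_adjoint_comp_sub_id_self, RCLike.norm_ofReal] at h
  constructor <;> linarith [abs_le.mp h]

theorem local_RIP2_general {N M : ℕ}
    (A : EuclideanSpace ℂ (Fin N × Fin N) →ₗ[ℂ] EuclideanSpace ℂ (Fin M))
    (δ₁ ε : ℝ)
    (hyp : ∀ v : EuclideanSpace ℂ (Fin N), ‖v‖ = 1 →
      ∀ (X : Matrix (Fin N) (Fin N) ℂ) (hX : X.IsHermitian),
        ‖(inner ℂ (toMatE X) (((LinearMap.adjoint A ∘ₗ A) -
            (LinearMap.id : EuclideanSpace ℂ (Fin N × Fin N) →ₗ[ℂ]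
              EuclideanSpace ℂ (Fin N × Fin N))) (outerE v)) : ℂ)‖ ≤
          δ₁ * (∑ i, |hX.eigenvalues i|))
    (ρ ρt : EuclideanSpace ℂ (Fin N))
    (hdist : pdist ρ ρt ≤ ε) (hε : ε < 1) (δ₂ : ℝ)
    (hδ₂ : δ₂ = Real.sqrt 2 * (2 + ε) * δ₁ / Real.sqrt ((1 - ε) * (2 - ε))) :
    ‖(inner ℂ (outerE ρ - outerE ρt) (((LinearMap.adjoint A ∘ₗ A) -
        (LinearMap.id : EuclideanSpace ℂ (Fin N × Fin N) →ₗ[ℂ]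
          EuclideanSpace ℂ (Fin N × Fin N))) (outerE ρ - outerE ρt)) : ℂ)‖ ≤
      δ₂ * ‖outerE ρ - outerE ρt‖ ^ 2 ∧
    (1 - δ₂) * ‖outerE ρ - outerE ρt‖ ^ 2 ≤ ‖A (outerE ρ - outerE ρt)‖ ^ 2 ∧
    ‖A (outerE ρ - outerE ρt)‖ ^ 2 ≤ (1 + δ₂) * ‖outerE ρ - outerE ρt‖ ^ 2 := by
  set X := vecMulVec ρ.ofLp (star ρ.ofLp) - vecMulVec ρt.ofLp (star ρt.ofLp)
  have hX : X.IsHermitian := (isHermitian_vecMulVec_star _).sub (isHermitian_vecMulVec_star _)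
  have hbound := hX.norm_inner_toMatE_apply_toMatE_le (rank_vecMulVec_star_sub_le _ _)
    fun v hv => hyp v hv X hX
  rw [show toMatE X = outerE ρ - outerE ρt from rfl, Nat.cast_two] at hbound
  rcases eq_or_ne (outerE ρ - outerE ρt) 0 with h0 | h0
  · simp [h0]
  have hδ₁ : 0 ≤ δ₁ := by
    have hE : 0 < ‖outerE ρ - outerE ρt‖ ^ 2 := by positivity
    nlinarith [(norm_nonneg _).trans hbound]
  have hδ : 2 * δ₁ ≤ δ₂ := by
    rw [hδ₂]
    exact two_mul_le_sqrt_two_mul_div_sqrt ((pdist_nonneg ρ ρt).trans hdist) hε hδ₁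
  have hinner := hbound.trans (mul_le_mul_of_nonneg_right hδ (sq_nonneg ‖outerE ρ - outerE ρt‖))
  exact ⟨hinner, sq_norm_apply_bounds_of_norm_inner_le hinner⟩

/-- Local RIP-2: under the testing bound `|⟨X, (AᴴA-I)(vvᴴ)⟩_F| ≤ δ₁‖X‖_*` for all
unit `v` and Hermitian `X`, if `dist(ρ, ρ_t) ≤ ε < 1` with `‖ρ_t‖ = 1`, then with
`E = ρρᴴ - ρ_tρ_tᴴ` and `δ₂ = √2(2+ε)δ₁/√((1-ε)(2-ε))`:
`|⟨E, (AᴴA - I)(E)⟩_F| ≤ δ₂‖E‖_F²` and `(1-δ₂)‖E‖_F² ≤ ‖A(E)‖² ≤ (1+δ₂)‖E‖_F²`. -/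
theorem local_RIP2 {N M : ℕ}
    (A : EuclideanSpace ℂ (Fin N × Fin N) →ₗ[ℂ] EuclideanSpace ℂ (Fin M))
    (δ₁ ε : ℝ)
    (hyp : ∀ v : EuclideanSpace ℂ (Fin N), ‖v‖ = 1 →
      ∀ (X : Matrix (Fin N) (Fin N) ℂ) (hX : X.IsHermitian),
        ‖(inner ℂ (toMatE X) (((LinearMap.adjoint A ∘ₗ A) -
            (LinearMap.id : EuclideanSpace ℂ (Fin N × Fin N) →ₗ[ℂ]
              EuclideanSpace ℂ (Fin N × Fin N))) (outerE v)) : ℂ)‖ ≤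
          δ₁ * (∑ i, |hX.eigenvalues i|))
    (ρ ρt : EuclideanSpace ℂ (Fin N)) (hρt : ‖ρt‖ = 1)
    (hdist : pdist ρ ρt ≤ ε) (hε : ε < 1) (δ₂ : ℝ)
    (hδ₂ : δ₂ = Real.sqrt 2 * (2 + ε) * δ₁ / Real.sqrt ((1 - ε) * (2 - ε))) :
    ‖(inner ℂ (outerE ρ - outerE ρt) (((LinearMap.adjoint A ∘ₗ A) -
        (LinearMap.id : EuclideanSpace ℂ (Fin N × Fin N) →ₗ[ℂ]
          EuclideanSpace ℂ (Fin N × Fin N))) (outerE ρ - outerE ρt)) : ℂ)‖ ≤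
      δ₂ * ‖outerE ρ - outerE ρt‖ ^ 2 ∧
    (1 - δ₂) * ‖outerE ρ - outerE ρt‖ ^ 2 ≤ ‖A (outerE ρ - outerE ρt)‖ ^ 2 ∧
    ‖A (outerE ρ - outerE ρt)‖ ^ 2 ≤ (1 + δ₂) * ‖outerE ρ - outerE ρt‖ ^ 2 :=
  local_RIP2_general A δ₁ ε hyp ρ ρt hdist hε δ₂ hδ₂
end

section
/- Let ρ_t be a unit vector, ρ ∈ ℂ^N with dist(ρ, ρ_t) ≤ ε, ρ̂_t = e^{iΦ(ρ)}ρ_t the closest global solution, and let ∇J(ρ) = ‖ρ‖²ρ - (ρ̂_t^H ρ)ρ̂_t + P ρ where P is a Hermitian matrix with spectral norm ‖P‖ ≤ δ₁(2+ε)‖ρ - ρ̂_t‖. Then ‖∇J(ρ)‖ ≤ (1+ε)(2+ε)(1+δ₁)·dist(ρ, ρ_t). -/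
/-! The quartic part of the gradient, `‖ρ‖²ρ - (ρ̂ᴴρ)ρ̂ = (ρρᴴ - ρ̂ρ̂ᴴ)ρ`, is Lipschitz in `ρ - ρ̂` with
constant `(‖ρ‖ + ‖ρ̂‖)‖ρ‖ ≤ (2+ε)(1+ε)`, and the perturbation `Pρ` contributes at most
`‖P‖‖ρ‖ ≤ δ₁(2+ε)(1+ε)‖ρ - ρ̂‖`. -/

open ComplexConjugate

/-- The spectral (operator) norm of a matrix. -/
noncomputable def specNorm {N : ℕ} (A : Matrix (Fin N) (Fin N) ℂ) : ℝ :=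
  ‖LinearMap.toContinuousLinearMap (Matrix.toEuclideanLin A)‖

section InnerProductSpace

variable {𝕜 E : Type*} [RCLike 𝕜] [NormedAddCommGroup E] [InnerProductSpace 𝕜 E]

theorem normSq_smul_sub_inner_smul_eq (x y : E) :
    ((‖x‖ ^ 2 : ℝ) : 𝕜) • x - inner 𝕜 y x • y = inner 𝕜 (x - y) x • x + inner 𝕜 y x • (x - y) := by
  rw [RCLike.ofReal_pow, ← inner_self_eq_norm_sq_to_K, inner_sub_left, sub_smul, smul_sub]
  abel

theorem norm_normSq_smul_sub_inner_smul_le (x y : E) :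
    ‖((‖x‖ ^ 2 : ℝ) : 𝕜) • x - inner 𝕜 y x • y‖ ≤ (‖x‖ + ‖y‖) * ‖x‖ * ‖x - y‖ := by
  rw [normSq_smul_sub_inner_smul_eq]
  calc ‖inner 𝕜 (x - y) x • x + inner 𝕜 y x • (x - y)‖
      ≤ ‖inner 𝕜 (x - y) x‖ * ‖x‖ + ‖inner 𝕜 y x‖ * ‖x - y‖ := by
        simpa only [norm_smul] using
          norm_add_le (inner 𝕜 (x - y) x • x) (inner 𝕜 y x • (x - y))
    _ ≤ (‖x - y‖ * ‖x‖) * ‖x‖ + (‖y‖ * ‖x‖) * ‖x - y‖ := by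
        gcongr <;> exact norm_inner_le_norm _ _
    _ = (‖x‖ + ‖y‖) * ‖x‖ * ‖x - y‖ := by ring

end InnerProductSpace

theorem specNorm_nonneg {N : ℕ} (A : Matrix (Fin N) (Fin N) ℂ) : 0 ≤ specNorm A :=
  norm_nonneg _

theorem norm_toEuclideanLin_apply_le {N : ℕ} (A : Matrix (Fin N) (Fin N) ℂ)
    (x : EuclideanSpace ℂ (Fin N)) : ‖Matrix.toEuclideanLin A x‖ ≤ specNorm A * ‖x‖ :=
  (LinearMap.toContinuousLinearMap (Matrix.toEuclideanLin A)).le_opNorm x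

theorem norm_exp_ofReal_mul_I_smul {E : Type*} [NormedAddCommGroup E] [NormedSpace ℂ E]
    (φ : ℝ) (v : E) : ‖Complex.exp (φ * Complex.I) • v‖ = ‖v‖ := by
  rw [norm_smul, Complex.norm_exp_ofReal_mul_I, one_mul]

theorem gradient_lipschitz_bound_general {N : ℕ} (ρ ρt ρhat : EuclideanSpace ℂ (Fin N))
    (ε δ₁ Φ : ℝ) (hρt : ‖ρt‖ = 1) (hdist : pdist ρ ρt ≤ ε)
    (hhat : ρhat = Complex.exp (Φ * Complex.I) • ρt)
    (hopt : ‖ρ - ρhat‖ = pdist ρ ρt)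
    (P : Matrix (Fin N) (Fin N) ℂ)
    (hPnorm : specNorm P ≤ δ₁ * (2 + ε) * ‖ρ - ρhat‖) :
    ‖((‖ρ‖ ^ 2 : ℝ) : ℂ) • ρ - (inner ℂ ρhat ρ : ℂ) • ρhat +
        Matrix.toEuclideanLin P ρ‖ ≤
      (1 + ε) * (2 + ε) * (1 + δ₁) * pdist ρ ρt := by
  have hhat_norm : ‖ρhat‖ = 1 := by rw [hhat, norm_exp_ofReal_mul_I_smul, hρt]
  have hdε : ‖ρ - ρhat‖ ≤ ε := hopt ▸ hdist
  have hρ_norm : ‖ρ‖ ≤ 1 + ε := by linarith [norm_le_insert' ρ ρhat]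
  rw [← hopt]
  calc _ ≤ (‖ρ‖ + ‖ρhat‖) * ‖ρ‖ * ‖ρ - ρhat‖ + specNorm P * ‖ρ‖ :=
        (norm_add_le _ _).trans
          (add_le_add (norm_normSq_smul_sub_inner_smul_le ρ ρhat) (norm_toEuclideanLin_apply_le P ρ))
    _ ≤ (1 + ε + 1) * (1 + ε) * ‖ρ - ρhat‖ + δ₁ * (2 + ε) * ‖ρ - ρhat‖ * (1 + ε) := by
        rw [hhat_norm]
        gcongr ?_ + ?_
        · gcongr
          linarith [norm_nonneg (ρ - ρhat)]
        · exact mul_le_mul hPnorm hρ_norm (norm_nonneg ρ) ((specNorm_nonneg P).trans hPnorm)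
    _ = (1 + ε) * (2 + ε) * (1 + δ₁) * ‖ρ - ρhat‖ := by ring

/-- Local Lipschitz bound on the gradient: with `ρ̂_t = e^{iΦ(ρ)}ρ_t` the closest
global solution, `∇J(ρ) = ‖ρ‖²ρ - (ρ̂_tᴴρ)ρ̂_t + Pρ` where `P` is Hermitian with
`‖P‖ ≤ δ₁(2+ε)‖ρ - ρ̂_t‖`, one has `‖∇J(ρ)‖ ≤ (1+ε)(2+ε)(1+δ₁)·dist(ρ, ρ_t)`. -/
theorem gradient_lipschitz_bound {N : ℕ} (ρ ρt ρhat : EuclideanSpace ℂ (Fin N))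
    (ε δ₁ Φ : ℝ) (hρt : ‖ρt‖ = 1) (hdist : pdist ρ ρt ≤ ε)
    (hhat : ρhat = Complex.exp (Φ * Complex.I) • ρt)
    (hopt : ‖ρ - ρhat‖ = pdist ρ ρt)
    (P : Matrix (Fin N) (Fin N) ℂ) (hP : P.IsHermitian)
    (hPnorm : specNorm P ≤ δ₁ * (2 + ε) * ‖ρ - ρhat‖) :
    ‖((‖ρ‖ ^ 2 : ℝ) : ℂ) • ρ - (inner ℂ ρhat ρ : ℂ) • ρhat +
        Matrix.toEuclideanLin P ρ‖ ≤
      (1 + ε) * (2 + ε) * (1 + δ₁) * pdist ρ ρt :=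
  gradient_lipschitz_bound_general ρ ρt ρhat ε δ₁ Φ hρt hdist hhat hopt P hPnorm
end
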